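/- arXiv:1506.00811 — 2 statements merged into one kernel-verified Lean document; each statement's English description precedes it below -/
import Mathlib

section
/- Let K be a number field (a subfield of ℚ̄ which is finite over ℚ) and let 𝔣 ∈ ℕ be such that K ∩ E_m ⊆ E_𝔣 for every m ∈ ℕ (for instance, the conductor of the maximal abelian subfield of K, which exists by the Kronecker–Weber theorem). Then for every ∘ ∈ {+, −, (none)} and every n ∈ ℕ, c_K^∘(n) = c_K^∘(gcd(n, 𝔣)). -/
noncomputable section

/-- The primitive `n`-th root of unity `exp(2πi/n)` in `ℂ`. -/
def zetaC (n : ℕ) : ℂ := Complex.exp (2 * Real.pi * Complex.I / n)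

/-- The `n`-th cyclotomic field `E_n = ℚ(ζ_n)`, as an intermediate field of `ℂ/ℚ`. -/
def Ecyc (n : ℕ) : IntermediateField ℚ ℂ := IntermediateField.adjoin ℚ {zetaC n}

/-- Writing `n = 2^j * m` with `m` odd, `E_n^+ = ℚ(ζ_{2^j} + ζ_{2^j}⁻¹)·E_m` if `j ≥ 3`,
and `E_n^+ = E_m` if `j ≤ 2`. -/
def EcycP (n : ℕ) : IntermediateField ℚ ℂ :=
  if 3 ≤ n.factorization 2 then
    IntermediateField.adjoin ℚ
        {zetaC (2 ^ n.factorization 2) + (zetaC (2 ^ n.factorization 2))⁻¹} ⊔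
      Ecyc (n / 2 ^ n.factorization 2)
  else Ecyc (n / 2 ^ n.factorization 2)

/-- Writing `n = 2^j * m` with `m` odd, `E_n^- = ℚ(ζ_{2^j} - ζ_{2^j}⁻¹)·E_m` if `j ≥ 3`,
and `E_n^- = E_m` if `j ≤ 2`. -/
def EcycM (n : ℕ) : IntermediateField ℚ ℂ :=
  if 3 ≤ n.factorization 2 then
    IntermediateField.adjoin ℚ
        {zetaC (2 ^ n.factorization 2) - (zetaC (2 ^ n.factorization 2))⁻¹} ⊔
      Ecyc (n / 2 ^ n.factorization 2)
  else Ecyc (n / 2 ^ n.factorization 2)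

/-- The gcd of a set of natural numbers (`0` if the set is empty), realised as the
largest common divisor. -/
def setGcd (S : Set ℕ) : ℕ := sSup {g : ℕ | ∀ s ∈ S, g ∣ s}

/-- `𝔇_K(n) = {d ∈ ℕ : K ∩ E_n ⊆ E_d}` (with `d` positive). -/
def Dset (K : IntermediateField ℚ ℂ) (n : ℕ) : Set ℕ :=
  {d | 0 < d ∧ K ⊓ Ecyc n ≤ Ecyc d}

/-- `𝔇_K^+(n) = {d ∈ ℕ : K ∩ E_n ⊆ E_d^+}` (with `d` positive). -/
def DsetP (K : IntermediateField ℚ ℂ) (n : ℕ) : Set ℕ :=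
  {d | 0 < d ∧ K ⊓ Ecyc n ≤ EcycP d}

/-- `𝔇_K^-(n) = {d ∈ ℕ : K ∩ E_n ⊆ E_d^-}` (with `d` positive). -/
def DsetM (K : IntermediateField ℚ ℂ) (n : ℕ) : Set ℕ :=
  {d | 0 < d ∧ K ⊓ Ecyc n ≤ EcycM d}

/-- `c_K(n) = gcd 𝔇_K(n)`. -/
def cK (K : IntermediateField ℚ ℂ) (n : ℕ) : ℕ := setGcd (Dset K n)

/-- `c_K^+(n) = gcd 𝔇_K^+(n)`. -/
def cKP (K : IntermediateField ℚ ℂ) (n : ℕ) : ℕ := setGcd (DsetP K n)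

/-- `c_K^-(n) = gcd 𝔇_K^-(n)`. -/
def cKM (K : IntermediateField ℚ ℂ) (n : ℕ) : ℕ := setGcd (DsetM K n)

/-- The compositum `F·A`, viewed as a field extension of `A`. -/
def relField (F A : IntermediateField ℚ ℂ) : IntermediateField ↥A ℂ :=
  IntermediateField.extendScalars (le_sup_right : A ≤ F ⊔ A)

/-- The relative degree `[F·A : A]`. -/
def relDeg (F A : IntermediateField ℚ ℂ) : ℕ := Module.finrank ↥A ↥(relField F A)

/-- The Galois group `Gal(F·A / A)`. -/
abbrev RelGal (F A : IntermediateField ℚ ℂ) :=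
  ↥(relField F A) ≃ₐ[↥A] ↥(relField F A)

end

/-! Under the hypothesis, `K ∩ E_n ⊆ E_n ∩ E_𝔣 = E_{gcd(n,𝔣)} ⊆ E_n`, so `K ∩ E_n` equals
`K ∩ E_{gcd(n,𝔣)}` and the sets `𝔇_K^∘(n)` and `𝔇_K^∘(gcd(n,𝔣))` coincide literally.
The intersection `E_m ∩ E_n` contains `E_{gcd}`, and the degree count
`[E_m ∩ E_n : ℚ] · φ(lcm) ≤ φ(m) φ(n) = φ(gcd) φ(lcm)` leaves no room between the two. -/

open IntermediateField Module
open scoped Nat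

theorem IntermediateField.finrank_sup_mul_finrank_inf_le {K L : Type*} [Field K] [Field L]
    [Algebra K L] (E F : IntermediateField K L) :
    finrank K ↥(E ⊔ F) * finrank K ↥(E ⊓ F) ≤ finrank K E * finrank K F := by
  have hE : E ⊓ F ≤ E := inf_le_left
  have hF : E ⊓ F ≤ F := inf_le_right
  have hEF : E ⊓ F ≤ E ⊔ F := hE.trans le_sup_left
  have hsup : finrank ↥(E ⊓ F) (extendScalars hEF) ≤
      finrank ↥(E ⊓ F) (extendScalars hE) * finrank ↥(E ⊓ F) (extendScalars hF) := by
    rw [← extendScalars_sup hE hF]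
    exact finrank_sup_le _ _
  rw [← finrank_bot_mul_relfinrank hEF, ← finrank_bot_mul_relfinrank hE,
    ← finrank_bot_mul_relfinrank hF, relfinrank_eq_finrank_of_le hEF,
    relfinrank_eq_finrank_of_le hE, relfinrank_eq_finrank_of_le hF]
  set d := finrank K ↥(E ⊓ F)
  calc _ = d * d * finrank ↥(E ⊓ F) (extendScalars hEF) := by ring
    _ ≤ d * d *
        (finrank ↥(E ⊓ F) (extendScalars hE) * finrank ↥(E ⊓ F) (extendScalars hF)) := by
      gcongr
    _ = _ := by ring

theorem Nat.totient_gcd_mul_totient_lcm (a b : ℕ) :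
    φ (a.gcd b) * φ (a.lcm b) = φ a * φ b := by
  rcases (a.gcd b).eq_zero_or_pos with h | h
  · simp [Nat.gcd_eq_zero_iff.1 h]
  have e := Nat.totient_gcd_mul_totient_mul (a.gcd b) (a.lcm b)
  rw [Nat.gcd_eq_left ((Nat.gcd_dvd_left a b).trans (Nat.dvd_lcm_left a b)), Nat.gcd_mul_lcm,
    Nat.totient_gcd_mul_totient_mul] at e
  exact (Nat.eq_of_mul_eq_mul_right h e).symm

theorem isPrimitiveRoot_zetaC (n : ℕ) [NeZero n] : IsPrimitiveRoot (zetaC n) n :=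
  Complex.isPrimitiveRoot_exp n (NeZero.ne n)

/- `↥(Ecyc n)` carries two defeq but not reducibly defeq `ℚ`-algebra structures; Mathlib's
cyclotomic API for intermediate fields is stated for `IntermediateField.algebra'`, while instance
search finds `DivisionRing.toRatAlgebra`. -/
instance isCyclotomicExtension_Ecyc (n : ℕ) [NeZero n] :
    @IsCyclotomicExtension {n} ℚ (Ecyc n) _ _ (Ecyc n).algebra' :=
  (isCyclotomicExtension_singleton_iff_eq_adjoin n ℚ ℂ _ (isPrimitiveRoot_zetaC n)).2 rfl

theorem finrank_Ecyc (n : ℕ) [NeZero n] : finrank ℚ (Ecyc n) = φ n :=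
  @IsCyclotomicExtension.finrank n _ ℚ (Ecyc n) _ _ _ (Ecyc n).algebra' _
    (Polynomial.cyclotomic.irreducible_rat (NeZero.pos n))

theorem Ecyc_le_Ecyc_of_dvd {d n : ℕ} [NeZero n] (h : d ∣ n) : Ecyc d ≤ Ecyc n :=
  have : NeZero d := ⟨fun hd => NeZero.ne n (Nat.eq_zero_of_zero_dvd (hd ▸ h))⟩
  isCyclotomicExtension_le_of_dvd _ _ d n _ _ h

theorem Ecyc_sup_Ecyc (m n : ℕ) [NeZero m] [NeZero n] : Ecyc m ⊔ Ecyc n = Ecyc (m.lcm n) :=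
  have := isCyclotomicExtension_lcm_sup _ _ m n (Ecyc m) (Ecyc n)
  have : NeZero (m.lcm n) := ⟨Nat.lcm_ne_zero (NeZero.ne m) (NeZero.ne n)⟩
  isCyclotomicExtension_eq {m.lcm n} _ _ _ _

theorem Ecyc_inf_Ecyc (m n : ℕ) [NeZero m] [NeZero n] : Ecyc m ⊓ Ecyc n = Ecyc (m.gcd n) := by
  have : NeZero (m.gcd n) := ⟨Nat.gcd_ne_zero_left (NeZero.ne m)⟩
  have : NeZero (m.lcm n) := ⟨Nat.lcm_ne_zero (NeZero.ne m) (NeZero.ne n)⟩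
  have : FiniteDimensional ℚ (Ecyc m) :=
    Module.finite_of_finrank_pos (by rw [finrank_Ecyc]; exact Nat.totient_pos.2 (NeZero.pos m))
  have hle : Ecyc (m.gcd n) ≤ Ecyc m ⊓ Ecyc n :=
    le_inf (Ecyc_le_Ecyc_of_dvd (Nat.gcd_dvd_left m n))
      (Ecyc_le_Ecyc_of_dvd (Nat.gcd_dvd_right m n))
  refine (eq_of_le_of_finrank_le hle ?_).symm
  have hdeg := finrank_sup_mul_finrank_inf_le (Ecyc m) (Ecyc n)
  rw [Ecyc_sup_Ecyc, finrank_Ecyc, finrank_Ecyc, finrank_Ecyc, ← Nat.totient_gcd_mul_totient_lcm,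
    mul_comm] at hdeg
  rw [finrank_Ecyc]
  exact Nat.le_of_mul_le_mul_right hdeg (Nat.totient_pos.2 (NeZero.pos _))

theorem inf_Ecyc_eq_inf_Ecyc_gcd {K : IntermediateField ℚ ℂ} {f n : ℕ} [NeZero f] [NeZero n]
    (hcond : K ⊓ Ecyc n ≤ Ecyc f) : K ⊓ Ecyc n = K ⊓ Ecyc (n.gcd f) := by
  refine le_antisymm (le_inf inf_le_left ?_) (inf_le_inf_left K ?_)
  · rw [← Ecyc_inf_Ecyc]
    exact le_inf inf_le_right hcond
  · exact Ecyc_le_Ecyc_of_dvd (Nat.gcd_dvd_left n f)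

theorem stmt_6_general (K : IntermediateField ℚ ℂ)
    (f : ℕ) (hf : 0 < f) (hcond : ∀ m : ℕ, 0 < m → K ⊓ Ecyc m ≤ Ecyc f) :
    ∀ n : ℕ, 0 < n →
      cK K n = cK K (n.gcd f) ∧ cKP K n = cKP K (n.gcd f) ∧ cKM K n = cKM K (n.gcd f) := by
  intro n hn
  have : NeZero f := ⟨hf.ne'⟩
  have : NeZero n := ⟨hn.ne'⟩
  have key := inf_Ecyc_eq_inf_Ecyc_gcd (hcond n hn)
  simp only [cK, cKP, cKM, Dset, DsetP, DsetM, key, and_self]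

/-- Let `K` be a number field and `𝔣 ∈ ℕ` with `K ∩ E_m ⊆ E_𝔣` for every
`m ∈ ℕ`. Then for every `∘ ∈ {+, −, (none)}` and every `n ∈ ℕ`,
`c_K^∘(n) = c_K^∘(gcd(n, 𝔣))`. -/
theorem stmt_6 (K : IntermediateField ℚ ℂ) [FiniteDimensional ℚ ↥K]
    (f : ℕ) (hf : 0 < f) (hcond : ∀ m : ℕ, 0 < m → K ⊓ Ecyc m ≤ Ecyc f) :
    ∀ n : ℕ, 0 < n →
      cK K n = cK K (n.gcd f) ∧ cKP K n = cKP K (n.gcd f) ∧ cKM K n = cKM K (n.gcd f) :=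
  stmt_6_general K f hf hcond
end

section
/- Let K be a subfield of the field ℚ̄ of algebraic numbers and let n ∈ ℕ. If 𝔇_K^+(n) ≠ ∅, then c_K^+(n) ∈ 𝔇_K^+(n), c_K^+(n) = min 𝔇_K^+(n), 𝔇_K^+(n) = c_K^+(n)·ℕ (the set of positive multiples of c_K^+(n)), and c_K^+(n) divides n. -/
/-!
The Galois group of `E_l / ℚ` is `(ℤ/l)ˣ`, acting by `ζ ↦ ζ ^ a`, and for `u ∣ l` the field
`E_u^+` is the fixed field of the exponents with `a ≡ 1` modulo the odd part of `u` and `a ≡ ±1`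
modulo its 2-part (automatic when the 2-part is at most `4`). For `l = lcm d e` the Chinese
remainder theorem lets every such exponent for `gcd d e` agree modulo `e` with one for `d`,
whence `E_d^+ ∩ E_e ⊆ E_{gcd d e}^+`. So if `m` is the least element of `𝔇_K^+(n)` and
`K ∩ E_n ⊆ E_e`, then `gcd m e ∈ 𝔇_K^+(n)` and hence `m ∣ e`; this applies to every element of
`𝔇_K^+(n)` and to `e = n`. Conversely `E_m^+ ⊆ E_d^+` whenever `m ∣ d`.
-/

open IntermediateField IsCyclotomicExtension.Rat

theorem zetaC_isPrimitiveRoot {n : ℕ} (hn : n ≠ 0) : IsPrimitiveRoot (zetaC n) n :=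
  Complex.isPrimitiveRoot_exp n hn

theorem zetaC_mem_Ecyc (n : ℕ) : zetaC n ∈ Ecyc n :=
  mem_adjoin_simple_self ℚ (zetaC n)

theorem zetaC_mem_Ecyc_of_dvd {d l : ℕ} (hl : l ≠ 0) (hdl : d ∣ l) : zetaC d ∈ Ecyc l := by
  have hd : d ≠ 0 := ne_zero_of_dvd_ne_zero hl hdl
  have : NeZero l := ⟨hl⟩
  obtain ⟨i, -, hi⟩ := (zetaC_isPrimitiveRoot hl).eq_pow_of_pow_eq_one
    (((zetaC_isPrimitiveRoot hd).pow_eq_one_iff_dvd l).2 hdl)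
  exact hi ▸ pow_mem (zetaC_mem_Ecyc l) i

theorem Ecyc_le_of_dvd {d l : ℕ} (hl : l ≠ 0) (hdl : d ∣ l) : Ecyc d ≤ Ecyc l :=
  adjoin_simple_le_iff.2 (zetaC_mem_Ecyc_of_dvd hl hdl)

theorem EcycP_le_Ecyc {d : ℕ} (hd : d ≠ 0) : EcycP d ≤ Ecyc d := by
  have hodd : Ecyc (ordCompl[2] d) ≤ Ecyc d := Ecyc_le_of_dvd hd (Nat.ordCompl_dvd d 2)
  have hζ : zetaC (ordProj[2] d) ∈ Ecyc d := zetaC_mem_Ecyc_of_dvd hd (Nat.ordProj_dvd d 2)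
  rw [EcycP]
  split_ifs
  · exact sup_le (adjoin_simple_le_iff.2 (add_mem hζ (inv_mem hζ))) hodd
  · exact hodd

theorem Ecyc_ordCompl_le_EcycP (d : ℕ) : Ecyc (ordCompl[2] d) ≤ EcycP d := by
  rw [EcycP]
  split_ifs
  · exact le_sup_right
  · exact le_rfl

theorem zetaC_add_inv_mem_EcycP {d : ℕ} (h : 3 ≤ d.factorization 2) :
    zetaC (ordProj[2] d) + (zetaC (ordProj[2] d))⁻¹ ∈ EcycP d := by
  rw [EcycP, if_pos h]
  exact (le_sup_left : _ ≤ _ ⊔ Ecyc (ordCompl[2] d)) (mem_adjoin_simple_self ℚ _)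

theorem Nat.ModEq.of_ordProj_of_ordCompl {p n a b : ℕ} (hp : p.Prime) (hn : n ≠ 0)
    (h₁ : a ≡ b [MOD ordProj[p] n]) (h₂ : a ≡ b [MOD ordCompl[p] n]) : a ≡ b [MOD n] := by
  rw [← Nat.ordProj_mul_ordCompl_eq_self n p]
  exact (Nat.modEq_and_modEq_iff_modEq_mul
    (Nat.Coprime.pow_left _ (Nat.coprime_ordCompl hp hn))).1 ⟨h₁, h₂⟩

/-- The exponents `a` of the automorphisms `ζ ↦ ζ ^ a` of `E_l` that fix `E_u^+`, for `u ∣ l`. -/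
def IsPlusExponent (u a : ℕ) : Prop :=
  a ≡ 1 [MOD ordCompl[2] u] ∧ (a ≡ 1 [MOD ordProj[2] u] ∨ ordProj[2] u ∣ a + 1)

namespace IsPlusExponent

variable {u a : ℕ}

theorem coprime (h : IsPlusExponent u a) : a.Coprime u := by
  have hodd : a.Coprime (ordCompl[2] u) := Nat.coprime_of_mul_modEq_one 1 (by simpa using h.1)
  have htwo : a.Coprime (ordProj[2] u) := by
    rcases h.2 with h1 | hneg
    · exact Nat.coprime_of_mul_modEq_one 1 (by simpa using h1)
    rcases Nat.eq_zero_or_pos (u.factorization 2) with hv | hv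
    · simp [hv]
    refine Nat.Coprime.pow_right _ (Nat.coprime_two_right.2 ?_)
    rw [Nat.odd_iff, ← Nat.succ_mod_two_eq_zero_iff, ← Nat.dvd_iff_mod_eq_zero]
    exact (dvd_pow_self 2 hv.ne').trans hneg
  simpa [Nat.ordProj_mul_ordCompl_eq_self] using htwo.mul_right hodd

theorem of_modEq {b : ℕ} (h : IsPlusExponent u a) (hba : b ≡ a [MOD u]) : IsPlusExponent u b := by
  have h₂ : b ≡ a [MOD ordProj[2] u] := hba.of_dvd (Nat.ordProj_dvd u 2)
  refine ⟨(hba.of_dvd (Nat.ordCompl_dvd u 2)).trans h.1, h.2.imp h₂.trans fun hneg => ?_⟩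
  exact ((h₂.add_right 1).dvd_iff dvd_rfl).2 hneg

theorem of_dvd {d : ℕ} (h : IsPlusExponent u a) (hdu : d ∣ u) (hu : u ≠ 0) :
    IsPlusExponent d a := by
  have h₂ : ordProj[2] d ∣ ordProj[2] u := Nat.ordProj_dvd_ordProj_of_dvd hu hdu 2
  exact ⟨h.1.of_dvd (Nat.ordCompl_dvd_ordCompl_of_dvd hdu 2), h.2.imp (·.of_dvd h₂) h₂.trans⟩

/-- Every odd number is `±1` modulo `4`, so only the odd part matters when `2 ^ 3 ∤ u`. -/
theorem of_factorization_le_two (hv : u.factorization 2 ≤ 2) (hco : a.Coprime u)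
    (h : a ≡ 1 [MOD ordCompl[2] u]) : IsPlusExponent u a := by
  refine ⟨h, ?_⟩
  have hco₂ : a.Coprime (ordProj[2] u) := hco.coprime_dvd_right (Nat.ordProj_dvd u 2)
  generalize u.factorization 2 = v at hv hco₂
  interval_cases v
  · exact Or.inl Nat.modEq_one
  all_goals
    have ha : a % 2 = 1 := Nat.odd_iff.1 (Nat.coprime_two_right.1
      (hco₂.coprime_dvd_right (dvd_pow_self 2 (by norm_num))))
    simp only [Nat.ModEq]
    omega

theorem exists_lift {g d t : ℕ} (ht : IsPlusExponent g t) (hgd : g ∣ d) (hd : d ≠ 0) :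
    ∃ s, IsPlusExponent d s ∧ s ≡ t [MOD g] := by
  have hg : g ≠ 0 := ne_zero_of_dvd_ne_zero hd hgd
  obtain ⟨hodd, hone | hneg⟩ := ht
  · exact ⟨1, ⟨Nat.ModEq.refl 1, Or.inl rfl⟩,
      (hone.symm.of_ordProj_of_ordCompl Nat.prime_two hg hodd.symm)⟩
  -- `η ≡ -1` modulo the 2-part and `η ≡ 1` modulo the odd part of `d`
  obtain ⟨η, hη₂, hηodd⟩ := Nat.chineseRemainder
    (Nat.Coprime.pow_left _ (Nat.coprime_ordCompl Nat.prime_two hd)) (ordProj[2] d - 1) 1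
  have hηneg : ordProj[2] d ∣ η + 1 := by
    have := hη₂.add_right 1
    rw [Nat.sub_add_cancel Nat.one_le_two_pow] at this
    exact (this.dvd_iff dvd_rfl).2 dvd_rfl
  have h₂ : ordProj[2] g ∣ ordProj[2] d := Nat.ordProj_dvd_ordProj_of_dvd hd hgd 2
  refine ⟨η, ⟨hηodd, Or.inr hηneg⟩, Nat.ModEq.of_ordProj_of_ordCompl Nat.prime_two hg ?_ ?_⟩
  · refine Nat.ModEq.add_right_cancel' 1 ?_
    exact ((Nat.modEq_zero_iff_dvd.2 (h₂.trans hηneg)).trans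
      (Nat.modEq_zero_iff_dvd.2 hneg).symm)
  · exact (hηodd.of_dvd (Nat.ordCompl_dvd_ordCompl_of_dvd hgd 2)).trans hodd.symm

theorem exists_modEq_of_gcd {d e t : ℕ} (hd : d ≠ 0) (hte : t.Coprime e)
    (ht : IsPlusExponent (d.gcd e) t) :
    ∃ b, b.Coprime (d.lcm e) ∧ IsPlusExponent d b ∧ b ≡ t [MOD e] := by
  obtain ⟨s, hs, hst⟩ := ht.exists_lift (Nat.gcd_dvd_left d e) hd
  obtain ⟨b, hbs, hbt⟩ := Nat.chineseRemainder' hst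
  have hb : IsPlusExponent d b := hs.of_modEq hbs
  have hbe : b.Coprime e := hbt.gcd_eq.trans hte
  exact ⟨b, (hb.coprime.mul_right hbe).coprime_dvd_right (Nat.lcm_dvd_mul d e), hb, hbt⟩

end IsPlusExponent

theorem add_inv_eq_add_inv_iff {F : Type*} [Field F] {x y : F} (hx : x ≠ 0) (hy : y ≠ 0) :
    x + x⁻¹ = y + y⁻¹ ↔ x = y ∨ x = y⁻¹ := by
  have key : (x - y) * (x * y - 1) = x * y * (x + x⁻¹ - (y + y⁻¹)) := by
    field_simp
    ring
  rw [← sub_eq_zero, ← mul_right_inj' (mul_ne_zero hx hy), ← key, mul_zero, mul_eq_zero,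
    sub_eq_zero, sub_eq_zero, mul_eq_one_iff_eq_inv₀ hy]

namespace IsPrimitiveRoot

theorem pow_eq_pow_iff_modEq {M : Type*} [CommMonoid M] {ζ : M} {k : ℕ}
    (h : IsPrimitiveRoot ζ k) (hk : k ≠ 0) {a b : ℕ} : ζ ^ a = ζ ^ b ↔ a ≡ b [MOD k] := by
  rw [(h.isOfFinOrder hk).pow_eq_pow_iff_modEq, ← h.eq_orderOf]

theorem pow_add_inv_pow_eq_iff {F : Type*} [Field F] {ζ : F} {k : ℕ} (h : IsPrimitiveRoot ζ k)
    (hk : k ≠ 0) (a : ℕ) : ζ ^ a + (ζ ^ a)⁻¹ = ζ + ζ⁻¹ ↔ a ≡ 1 [MOD k] ∨ k ∣ a + 1 := by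
  have hζ : ζ ≠ 0 := h.ne_zero hk
  rw [add_inv_eq_add_inv_iff (pow_ne_zero a hζ) hζ, ← h.pow_eq_one_iff_dvd, pow_succ,
    mul_eq_one_iff_eq_inv₀ hζ, ← h.pow_eq_pow_iff_modEq hk, pow_one]

end IsPrimitiveRoot

section Equalizer

variable {K L E : Type*} [Field K] [Field L] [Field E] [Algebra K L] [Algebra K E]

def AlgEquiv.equalizerField (σ τ : Gal(L/K)) : IntermediateField K L :=
  { AlgHom.equalizer (σ : L →ₐ[K] L) τ with
    inv_mem' := fun x (hx : σ x = τ x) => show σ x⁻¹ = τ x⁻¹ by rw [map_inv₀, map_inv₀, hx] }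

theorem AlgHom.mem_map_equalizerField_iff (ι : L →ₐ[K] E) {σ τ : Gal(L/K)} (y : L) :
    ι y ∈ (σ.equalizerField τ).map ι ↔ σ y = τ y :=
  ι.toRingHom.injective.mem_set_image

theorem IsGalois.mem_of_forall_fixes [FiniteDimensional K L] [IsGalois K L] (ι : L →ₐ[K] E)
    {F : IntermediateField K E} (hF : F ≤ ι.fieldRange) (x : L)
    (h : ∀ σ : Gal(L/K), F ≤ (σ.equalizerField 1).map ι → σ x = x) : ι x ∈ F := by
  change x ∈ F.comap ι
  rw [← IsGalois.fixedField_fixingSubgroup (F.comap ι), mem_fixedField_iff]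
  intro σ hσ
  refine h σ fun z hz => ?_
  obtain ⟨y, rfl⟩ := hF hz
  exact (ι.mem_map_equalizerField_iff y).2 ((mem_fixingSubgroup_iff _ σ).1 hσ y hz)

end Equalizer

/-- The inclusion `E_l → ℂ` for the canonical `ℚ`-algebra structure of the field `E_l` (the one
`galEquivZMod` uses), which is not reducibly the subfield structure that `IntermediateField.lift`
would use. -/
noncomputable def ecycVal (l : ℕ) : Ecyc l →ₐ[ℚ] ℂ := (algebraMap (Ecyc l) ℂ).toRatAlgHom

theorem Ecyc_le_fieldRange_ecycVal (l : ℕ) : Ecyc l ≤ (ecycVal l).fieldRange :=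
  fun x hx => ⟨⟨x, hx⟩, rfl⟩

section CyclotomicGalois

variable {l : ℕ} [NeZero l]

instance : IsCyclotomicExtension {l} ℚ (Ecyc l) := by
  have hζ := zetaC_isPrimitiveRoot (NeZero.ne l)
  have hEq : Algebra.adjoin ℚ {zetaC l} = (Ecyc l).toSubalgebra :=
    (adjoin_simple_toSubalgebra_of_isAlgebraic
      (hζ.isIntegral (NeZero.pos l)).tower_top.isAlgebraic).symm
  exact IsCyclotomicExtension.equiv _ _ _ (Subalgebra.equivOfEq _ _ hEq)
    (h := hζ.adjoin_isCyclotomicExtension ℚ)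

instance : NumberField (Ecyc l) := IsCyclotomicExtension.numberField {l} ℚ (Ecyc l)

instance : IsGalois ℚ (Ecyc l) := IsCyclotomicExtension.isGalois {l} ℚ (Ecyc l)

noncomputable def galExp (σ : Gal(Ecyc l/ℚ)) : ℕ := (galEquivZMod l (Ecyc l) σ : ZMod l).val

theorem galExp_coprime (σ : Gal(Ecyc l/ℚ)) : (galExp σ).Coprime l :=
  ZMod.val_coe_unit_coprime _

theorem galExp_one : galExp (1 : Gal(Ecyc l/ℚ)) ≡ 1 [MOD l] := by
  simp only [galExp, map_one, Units.val_one, ZMod.val_one_eq_one_mod]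
  exact Nat.mod_modEq 1 l

theorem exists_galExp_modEq {b : ℕ} (hb : b.Coprime l) :
    ∃ σ : Gal(Ecyc l/ℚ), galExp σ ≡ b [MOD l] :=
  ⟨(galEquivZMod l (Ecyc l)).symm (ZMod.unitOfCoprime b hb), by
    simp only [galExp, MulEquiv.apply_symm_apply, ZMod.coe_unitOfCoprime, ZMod.val_natCast]
    exact Nat.mod_modEq b l⟩

noncomputable def zetaIn {u : ℕ} (hu : u ∣ l) : Ecyc l :=
  ⟨zetaC u, zetaC_mem_Ecyc_of_dvd (NeZero.ne l) hu⟩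

theorem isPrimitiveRoot_zetaIn {u : ℕ} (hu : u ∣ l) : IsPrimitiveRoot (zetaIn hu) u :=
  IsPrimitiveRoot.coe_submonoidClass_iff.1
    (zetaC_isPrimitiveRoot (ne_zero_of_dvd_ne_zero (NeZero.ne l) hu))

theorem apply_zetaIn (σ : Gal(Ecyc l/ℚ)) {u : ℕ} (hu : u ∣ l) :
    σ (zetaIn hu) = zetaIn hu ^ galExp σ :=
  galEquivZMod_apply_of_pow_eq l _ σ (((isPrimitiveRoot_zetaIn hu).pow_eq_one_iff_dvd l).2 hu)

theorem Ecyc_le_map_equalizerField {u : ℕ} (hu : u ∣ l) {σ τ : Gal(Ecyc l/ℚ)}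
    (h : galExp σ ≡ galExp τ [MOD u]) : Ecyc u ≤ (σ.equalizerField τ).map (ecycVal l) := by
  rw [Ecyc, adjoin_simple_le_iff]
  refine ((ecycVal l).mem_map_equalizerField_iff (zetaIn hu)).2 ?_
  rw [apply_zetaIn, apply_zetaIn]
  exact ((isPrimitiveRoot_zetaIn hu).pow_eq_pow_iff_modEq
    (ne_zero_of_dvd_ne_zero (NeZero.ne l) hu)).2 h

theorem EcycP_le_map_equalizerField_one {u : ℕ} (hu : u ∣ l) {σ : Gal(Ecyc l/ℚ)}
    (h : IsPlusExponent u (galExp σ)) : EcycP u ≤ (σ.equalizerField 1).map (ecycVal l) := by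
  have hm : ordCompl[2] u ∣ l := (Nat.ordCompl_dvd u 2).trans hu
  have hq : ordProj[2] u ∣ l := (Nat.ordProj_dvd u 2).trans hu
  have hodd : Ecyc (ordCompl[2] u) ≤ (σ.equalizerField 1).map (ecycVal l) :=
    Ecyc_le_map_equalizerField hm (h.1.trans (galExp_one.of_dvd hm).symm)
  rw [EcycP]
  split_ifs
  · refine sup_le ?_ hodd
    rw [adjoin_simple_le_iff]
    refine ((ecycVal l).mem_map_equalizerField_iff (zetaIn hq + (zetaIn hq)⁻¹)).2 ?_
    rw [AlgEquiv.one_apply, map_add, map_inv₀, apply_zetaIn]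
    exact ((isPrimitiveRoot_zetaIn hq).pow_add_inv_pow_eq_iff (by positivity) _).2 h.2
  · exact hodd

theorem isPlusExponent_galExp {u : ℕ} (hu : u ∣ l) {σ : Gal(Ecyc l/ℚ)}
    (hσ : EcycP u ≤ (σ.equalizerField 1).map (ecycVal l)) : IsPlusExponent u (galExp σ) := by
  have hm : ordCompl[2] u ∣ l := (Nat.ordCompl_dvd u 2).trans hu
  have hq : ordProj[2] u ∣ l := (Nat.ordProj_dvd u 2).trans hu
  have fixes : ∀ y : Ecyc l, ecycVal l y ∈ EcycP u → σ y = y := fun y hy =>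
    ((ecycVal l).mem_map_equalizerField_iff y).1 (hσ hy)
  have hodd : galExp σ ≡ 1 [MOD ordCompl[2] u] := by
    refine ((isPrimitiveRoot_zetaIn hm).pow_eq_pow_iff_modEq
      (ne_zero_of_dvd_ne_zero (NeZero.ne l) hm)).1 ?_
    rw [← apply_zetaIn, pow_one]
    exact fixes _ (Ecyc_ordCompl_le_EcycP u (zetaC_mem_Ecyc _))
  by_cases hv : 3 ≤ u.factorization 2
  · refine ⟨hodd, ((isPrimitiveRoot_zetaIn hq).pow_add_inv_pow_eq_iff (by positivity) _).1 ?_⟩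
    rw [← apply_zetaIn, ← map_inv₀, ← map_add]
    exact fixes (zetaIn hq + (zetaIn hq)⁻¹) (zetaC_add_inv_mem_EcycP hv)
  · exact .of_factorization_le_two (by omega) ((galExp_coprime σ).coprime_dvd_right hu) hodd

end CyclotomicGalois

theorem EcycP_inf_Ecyc_le {d e : ℕ} (hd : d ≠ 0) (he : e ≠ 0) :
    EcycP d ⊓ Ecyc e ≤ EcycP (d.gcd e) := by
  rintro x ⟨hxd, hxe⟩
  have : NeZero (d.lcm e) := ⟨Nat.lcm_ne_zero hd he⟩
  have hdl : d ∣ d.lcm e := Nat.dvd_lcm_left d e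
  have hel : e ∣ d.lcm e := Nat.dvd_lcm_right d e
  have hgl : d.gcd e ∣ d.lcm e := (Nat.gcd_dvd_left d e).trans hdl
  have hxl : x ∈ Ecyc (d.lcm e) := Ecyc_le_of_dvd (NeZero.ne _) hel hxe
  refine IsGalois.mem_of_forall_fixes (ecycVal _)
    ((EcycP_le_Ecyc (Nat.gcd_ne_zero_left hd)).trans
      ((Ecyc_le_of_dvd (NeZero.ne _) hgl).trans (Ecyc_le_fieldRange_ecycVal _)))
    ⟨x, hxl⟩ fun σ hσ => ?_
  -- `β` acts like `σ` on `E_e` and like an element of `Gal(E_l / E_d^+)` on `E_d`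
  obtain ⟨b, hbl, hbd, hbe⟩ := IsPlusExponent.exists_modEq_of_gcd hd
    ((galExp_coprime σ).coprime_dvd_right hel) (isPlusExponent_galExp hgl hσ)
  obtain ⟨β, hβ⟩ := exists_galExp_modEq hbl
  have hβσ : σ ⟨x, hxl⟩ = β ⟨x, hxl⟩ :=
    ((ecycVal _).mem_map_equalizerField_iff _).1
      (Ecyc_le_map_equalizerField hel (hbe.symm.trans (hβ.of_dvd hel).symm) hxe)
  rw [hβσ]
  exact ((ecycVal _).mem_map_equalizerField_iff _).1
    (EcycP_le_map_equalizerField_one hdl (hbd.of_modEq (hβ.of_dvd hdl)) hxd)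

theorem EcycP_le_of_dvd {d e : ℕ} (he : e ≠ 0) (hde : d ∣ e) : EcycP d ≤ EcycP e := by
  have : NeZero e := ⟨he⟩
  intro x hx
  have hxe : x ∈ Ecyc e :=
    Ecyc_le_of_dvd he hde (EcycP_le_Ecyc (ne_zero_of_dvd_ne_zero he hde) hx)
  refine IsGalois.mem_of_forall_fixes (ecycVal e)
    ((EcycP_le_Ecyc he).trans (Ecyc_le_fieldRange_ecycVal e)) ⟨x, hxe⟩ fun σ hσ => ?_
  exact ((ecycVal e).mem_map_equalizerField_iff _).1
    (EcycP_le_map_equalizerField_one hde ((isPlusExponent_galExp dvd_rfl hσ).of_dvd hde he) hx)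

theorem setGcd_eq {S : Set ℕ} {m : ℕ} (hm : m ∈ S) (hm0 : 0 < m) (hdvd : ∀ s ∈ S, m ∣ s) :
    setGcd S = m :=
  IsGreatest.csSup_eq ⟨hdvd, fun _ hg => Nat.le_of_dvd hm0 (hg m hm)⟩

theorem stmt_8_general (K : IntermediateField ℚ ℂ)
    (n : ℕ) (hn : 0 < n) (hne : (DsetP K n).Nonempty) :
    cKP K n ∈ DsetP K n ∧
    IsLeast (DsetP K n) (cKP K n) ∧
    DsetP K n = {d : ℕ | ∃ k : ℕ, 0 < k ∧ d = cKP K n * k} ∧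
    cKP K n ∣ n := by
  set m := sInf (DsetP K n)
  have hm : m ∈ DsetP K n := Nat.sInf_mem hne
  -- minimality of `m` forces `gcd m e = m`, since `gcd m e ∈ 𝔇_K^+(n)`
  have hdvd : ∀ e ≠ 0, K ⊓ Ecyc n ≤ Ecyc e → m ∣ e := fun e he hle => by
    have hgcd : m.gcd e ∈ DsetP K n := ⟨Nat.gcd_pos_of_pos_left e hm.1,
      (le_inf hm.2 hle).trans (EcycP_inf_Ecyc_le hm.1.ne' he)⟩
    rw [← Nat.gcd_eq_left_iff_dvd]
    exact le_antisymm (Nat.gcd_le_left e hm.1) (Nat.sInf_le hgcd)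
  have hdvdD : ∀ d ∈ DsetP K n, m ∣ d := fun d hd =>
    hdvd d hd.1.ne' (hd.2.trans (EcycP_le_Ecyc hd.1.ne'))
  rw [cKP, setGcd_eq hm hm.1 hdvdD]
  refine ⟨hm, ⟨hm, fun d hd => Nat.le_of_dvd hd.1 (hdvdD d hd)⟩, ?_, hdvd n hn.ne' inf_le_right⟩
  ext d
  refine ⟨fun hd => ?_, fun ⟨k, hk, hd⟩ => ?_⟩
  · obtain ⟨k, rfl⟩ := hdvdD d hd
    exact ⟨k, Nat.pos_of_mul_pos_left hd.1, rfl⟩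
  · subst hd
    have hmk : 0 < m * k := Nat.mul_pos hm.1 hk
    exact ⟨hmk, hm.2.trans (EcycP_le_of_dvd hmk.ne' (dvd_mul_right m k))⟩

/-- For a subfield `K` of the algebraic numbers and `n ∈ ℕ` with
`𝔇_K^+(n) ≠ ∅`: `c_K^+(n) ∈ 𝔇_K^+(n)`, `c_K^+(n)` is the minimum of `𝔇_K^+(n)`,
`𝔇_K^+(n)` is the set of positive multiples of `c_K^+(n)`, and `c_K^+(n) ∣ n`. -/
theorem stmt_8 (K : IntermediateField ℚ ℂ) (hK : ∀ x ∈ K, IsAlgebraic ℚ x)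
    (n : ℕ) (hn : 0 < n) (hne : (DsetP K n).Nonempty) :
    cKP K n ∈ DsetP K n ∧
    IsLeast (DsetP K n) (cKP K n) ∧
    DsetP K n = {d : ℕ | ∃ k : ℕ, 0 < k ∧ d = cKP K n * k} ∧
    cKP K n ∣ n :=
  stmt_8_general K n hn hne
end
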